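/- For any nonempty graphs G and H on disjoint vertex sets, ρ(G ∨ H) = max{ρ(G) + a(G), ρ(H) + a(H)}, where G ∨ H is the join, ρ is the maximum double neighborhood number, and a(K) = 1 if K has an isolated vertex and a(K) = 0 otherwise. -/

import Mathlib

/-!
In `G ∨ H` a vertex of `G` is dominated by its dominators in `G` and by every vertex of `H`.
Hence the `G`-part of a DNS of the join is a DNS of `G`, and the witness of the last vertex
forces the other side to contribute at most two vertices. Those extra vertices are paid for by
prolonging a DNS of `G` (or `H`) by one or two steps, which is always possible except at an
isolated vertex; there `a(K)` accounts for the missing step. Conversely, a maximum DNS of `G`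
followed by any vertex of `H` is a DNS of the join as soon as `G` has an isolated vertex,
which that vertex of `H` dominates for the second time only.
-/

open SimpleGraph

variable {V : Type*}

/-- The closed neighborhood of a vertex. -/
def cnbr (G : SimpleGraph V) (v : V) : Set V := insert v (G.neighborSet v)

/-- The number of vertices in the list `l` that dominate `u` (i.e. whose closed
neighborhood contains `u`). -/
noncomputable def domCount (G : SimpleGraph V) (u : V) (l : List V) : ℕ :=
  {w | w ∈ l ∧ u ∈ cnbr G w}.ncard

/-- A double neighborhood sequence (DNS): a sequence of distinct vertices in which each
vertex dominates some vertex dominated at most once by its predecessors. -/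
def IsDNS (G : SimpleGraph V) (l : List V) : Prop :=
  l.Nodup ∧ ∀ i : Fin l.length, ∃ u ∈ cnbr G (l.get i), domCount G u (l.take i) ≤ 1

/-- A double dominating sequence (DDS): a DNS whose underlying set is doubly dominating. -/
def IsDDS (G : SimpleGraph V) (l : List V) : Prop :=
  IsDNS G l ∧ ∀ v, 2 ≤ domCount G v l

/-- The Grundy double domination number: maximum length of a DDS. -/
noncomputable def gddn (G : SimpleGraph V) : ℕ :=
  sSup {n | ∃ l : List V, IsDDS G l ∧ l.length = n}

/-- The maximum double neighborhood number: maximum length of a DNS. -/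
noncomputable def mdnn (G : SimpleGraph V) : ℕ :=
  sSup {n | ∃ l : List V, IsDNS G l ∧ l.length = n}

/-- A legal (Grundy domination) sequence. -/
def IsLegal (G : SimpleGraph V) (l : List V) : Prop :=
  l.Nodup ∧ ∀ i : Fin l.length, ∃ u ∈ cnbr G (l.get i), domCount G u (l.take i) = 0

/-- A dominating sequence: legal sequence whose underlying set dominates. -/
def IsDomSeq (G : SimpleGraph V) (l : List V) : Prop :=
  IsLegal G l ∧ ∀ v, 1 ≤ domCount G v l

/-- The Grundy domination number: maximum length of a dominating sequence. -/
noncomputable def grundy (G : SimpleGraph V) : ℕ :=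
  sSup {n | ∃ l : List V, IsDomSeq G l ∧ l.length = n}

/-- The double domination number: minimum size of a double dominating set. -/
noncomputable def ddomNum (G : SimpleGraph V) : ℕ :=
  sInf {n | ∃ D : Set V, (∀ v, 2 ≤ {w | w ∈ D ∧ v ∈ cnbr G w}.ncard) ∧ D.ncard = n}

/-- The join of two graphs on disjoint vertex sets: disjoint union plus all edges
between the two sides. -/
def joinG {α β : Type*} (G : SimpleGraph α) (H : SimpleGraph β) : SimpleGraph (α ⊕ β) where
  Adj a b := match a, b with
    | .inl x, .inl y => G.Adj x y
    | .inr x, .inr y => H.Adj x y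
    | .inl _, .inr _ => True
    | .inr _, .inl _ => True
  symm := by
    refine ⟨?_⟩
    rintro (x | x) (y | y) h
    · exact G.adj_symm h
    · trivial
    · trivial
    · exact H.adj_symm h
  loopless := by
    refine ⟨?_⟩
    rintro (x | x) h
    · exact G.irrefl h
    · exact H.irrefl h

open Classical in
/-- Indicator that a graph has an isolated vertex. -/
noncomputable def isoInd (G : SimpleGraph V) : ℕ :=
  if ∃ x, ∀ y, ¬ G.Adj x y then 1 else 0

section DNS

variable {W : Type*} {G : SimpleGraph V} {G' : SimpleGraph W}

lemma mem_cnbr {u v : V} : u ∈ cnbr G v ↔ u = v ∨ G.Adj v u := by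
  simp [cnbr, mem_neighborSet]

lemma self_mem_cnbr (v : V) : v ∈ cnbr G v := Set.mem_insert v _

lemma finite_dominators (u : V) (l : List V) : {w | w ∈ l ∧ u ∈ cnbr G w}.Finite :=
  l.finite_toSet.subset fun _ hw => hw.1

open Classical in
lemma domCount_eq_countP (u : V) {l : List V} (h : l.Nodup) :
    domCount G u l = l.countP (fun w => u ∈ cnbr G w) := by
  have hset : {w | w ∈ l ∧ u ∈ cnbr G w} = (l.filter (fun w => u ∈ cnbr G w)).toFinset := by
    ext w
    simp
  rw [domCount, hset, Set.ncard_coe_finset, List.toFinset_card_of_nodup (h.filter _),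
    List.countP_eq_length_filter]

lemma domCount_le_length (u : V) (l : List V) : domCount G u l ≤ l.length := by
  classical
  calc domCount G u l ≤ (l.toFinset : Set V).ncard :=
        Set.ncard_le_ncard (fun w hw => by simpa using hw.1) (Finset.finite_toSet _)
    _ ≤ l.length := by rw [Set.ncard_coe_finset]; exact l.toFinset_card_le

lemma domCount_append_singleton_le (u x : V) (l : List V) :
    domCount G u (l ++ [x]) ≤ domCount G u l + 1 := by
  have hsub : {w | w ∈ l ++ [x] ∧ u ∈ cnbr G w} ⊆ insert x {w | w ∈ l ∧ u ∈ cnbr G w} := by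
    rintro w ⟨hw, hu⟩
    rcases List.mem_append.mp hw with hw | hw
    · exact Or.inr ⟨hw, hu⟩
    · exact Or.inl (List.mem_singleton.mp hw)
  exact (Set.ncard_le_ncard hsub ((finite_dominators u l).insert x)).trans
    (Set.ncard_insert_le _ _)

lemma domCount_le_one_of_isolated {x : V} (hx : ∀ y, ¬ G.Adj x y) (l : List V) :
    domCount G x l ≤ 1 := by
  have hsub : {w | w ∈ l ∧ x ∈ cnbr G w} ⊆ {x} := fun w ⟨_, hw⟩ =>
    (mem_cnbr.mp hw).elim Eq.symm fun h => absurd h.symm (hx w)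
  exact (Set.ncard_le_ncard hsub).trans_eq (Set.ncard_singleton x)

lemma isDNS_nil : IsDNS G [] := ⟨List.nodup_nil, fun i => i.elim0⟩

lemma isDNS_append_singleton {l : List V} {x : V} :
    IsDNS G (l ++ [x]) ↔ IsDNS G l ∧ x ∉ l ∧ ∃ u ∈ cnbr G x, domCount G u l ≤ 1 := by
  have hnodup : (l ++ [x]).Nodup ↔ x ∉ l ∧ l.Nodup := by
    rw [← List.concat_eq_append, List.nodup_concat]
  simp only [IsDNS, hnodup, Fin.forall_iff, List.length_append, List.length_singleton,
    Nat.forall_lt_succ_right', List.get_eq_getElem]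
  simp +contextual only [List.getElem_append_left, Nat.le_of_lt, List.take_append_of_le_length,
    le_refl, List.getElem_append_right, tsub_self, List.getElem_cons_zero, List.take_length]
  tauto

lemma domCount_map (f : G ↪g G') (u : V) (l : List V) :
    domCount G' (f u) (l.map f) = domCount G u l := by
  have hset : {w | w ∈ l.map f ∧ f u ∈ cnbr G' w} = f '' {w | w ∈ l ∧ u ∈ cnbr G w} := by
    ext w
    simp only [Set.mem_ofPred_eq, Set.mem_image, List.mem_map, mem_cnbr]
    constructor
    · rintro ⟨⟨v, hv, rfl⟩, h⟩
      exact ⟨v, ⟨hv, by simpa using h⟩, rfl⟩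
    · rintro ⟨v, ⟨hv, h⟩, rfl⟩
      exact ⟨⟨v, hv, rfl⟩, by simpa using h⟩
  rw [domCount, hset, Set.ncard_image_of_injective _ f.injective, domCount]

lemma IsDNS.map (f : G ↪g G') {l : List V} (h : IsDNS G l) : IsDNS G' (l.map f) := by
  induction l using List.reverseRecOn with
  | nil => exact isDNS_nil
  | append_singleton l x ih =>
    obtain ⟨hl, hx, u, hu, hcount⟩ := isDNS_append_singleton.mp h
    rw [List.map_append, List.map_singleton, isDNS_append_singleton]
    refine ⟨ih hl, by simpa using hx, f u, ?_, by rwa [domCount_map]⟩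
    simpa [mem_cnbr] using hu

lemma isoInd_eq_one {x : V} (hx : ∀ y, ¬ G.Adj x y) : isoInd G = 1 :=
  if_pos ⟨x, hx⟩

variable [Fintype V]

lemma bddAbove_isDNS_lengths : BddAbove {n | ∃ l : List V, IsDNS G l ∧ l.length = n} := by
  refine ⟨Fintype.card V, ?_⟩
  rintro _ ⟨l, hl, rfl⟩
  exact hl.1.length_le_card

lemma length_le_mdnn {l : List V} (h : IsDNS G l) : l.length ≤ mdnn G :=
  le_csSup bddAbove_isDNS_lengths ⟨l, h, rfl⟩

lemma exists_isDNS_length_eq_mdnn : ∃ l : List V, IsDNS G l ∧ l.length = mdnn G :=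
  Nat.sSup_mem (s := {n | ∃ l : List V, IsDNS G l ∧ l.length = n}) ⟨0, [], isDNS_nil, rfl⟩
    bddAbove_isDNS_lengths

lemma mdnn_le_of_embedding [Fintype W] (f : G ↪g G') : mdnn G ≤ mdnn G' := by
  obtain ⟨l, hl, hlen⟩ := exists_isDNS_length_eq_mdnn (G := G)
  simpa [hlen] using length_le_mdnn (hl.map f)

/-- Prolong `l` by `u` itself or by a neighbour of `u`; only an isolated `u` admits neither, and
then `isoInd G = 1`. -/
lemma length_add_one_le {l : List V} (h : IsDNS G l) {u : V} (hu : domCount G u l ≤ 1) :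
    l.length + 1 ≤ mdnn G + isoInd G := by
  by_cases hul : u ∈ l
  · rcases em (∃ w, G.Adj u w) with ⟨w, hw⟩ | hiso
    swap
    · linarith [length_le_mdnn h, isoInd_eq_one fun y hy => hiso ⟨y, hy⟩]
    -- `u` already dominates itself, so no other vertex of `l` dominates `u`
    have hwl : w ∉ l := fun hwl => G.ne_of_adj hw <|
      (Set.ncard_le_one_iff (finite_dominators u l)).mp hu
        ⟨hul, self_mem_cnbr u⟩ ⟨hwl, mem_cnbr.mpr (Or.inr hw.symm)⟩
    have := length_le_mdnn
      (isDNS_append_singleton.mpr ⟨h, hwl, u, mem_cnbr.mpr (Or.inr hw.symm), hu⟩)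
    simp only [List.length_append, List.length_singleton] at this
    omega
  · have := length_le_mdnn (isDNS_append_singleton.mpr ⟨h, hul, u, self_mem_cnbr u, hu⟩)
    simp only [List.length_append, List.length_singleton] at this
    omega

lemma length_add_two_le {l : List V} (h : IsDNS G l) {u : V} (hu : domCount G u l = 0) :
    l.length + 2 ≤ mdnn G + isoInd G := by
  have hul : u ∉ l := fun hul =>
    ((Set.ncard_pos (finite_dominators u l)).mpr ⟨u, hul, self_mem_cnbr u⟩).ne' hu
  have hext : IsDNS G (l ++ [u]) :=
    isDNS_append_singleton.mpr ⟨h, hul, u, self_mem_cnbr u, hu.trans_le zero_le_one⟩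
  have := length_add_one_le hext ((domCount_append_singleton_le u u l).trans (by omega))
  simp only [List.length_append, List.length_singleton] at this
  omega

end DNS

section Join

variable {α β : Type*} {G : SimpleGraph α} {H : SimpleGraph β}

namespace joinG

variable (G H)

@[simps]
def inlEmbedding : G ↪g joinG G H where
  toFun := Sum.inl
  inj' := Sum.inl_injective
  map_rel_iff' := Iff.rfl

@[simps!]
def swapIso : joinG G H ≃g joinG H G where
  toEquiv := Equiv.sumComm α β
  map_rel_iff' {a b} := by cases a <;> cases b <;> rfl

end joinG

@[simp]
lemma joinG_adj_inl_inl {x y : α} : (joinG G H).Adj (.inl x) (.inl y) ↔ G.Adj x y := Iff.rfl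

lemma inl_mem_cnbr_joinG_inl {u v : α} :
    .inl u ∈ cnbr (joinG G H) (.inl v) ↔ u ∈ cnbr G v := by
  simp [mem_cnbr]

lemma inl_mem_cnbr_joinG_inr {u : α} {v : β} : .inl u ∈ cnbr (joinG G H) (.inr v) :=
  mem_cnbr.mpr (Or.inr trivial)

lemma length_filterMap_getLeft?_add_getRight? (l : List (α ⊕ β)) :
    (l.filterMap Sum.getLeft?).length + (l.filterMap Sum.getRight?).length = l.length := by
  induction l with
  | nil => rfl
  | cons a l ih => cases a <;> simp [List.filterMap_cons, ← ih] <;> omega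

lemma domCount_joinG_inl (u : α) {l : List (α ⊕ β)} (h : l.Nodup) :
    domCount (joinG G H) (.inl u) l =
      domCount G u (l.filterMap Sum.getLeft?) + (l.filterMap Sum.getRight?).length := by
  classical
  have hleft : (l.filterMap Sum.getLeft?).Nodup :=
    h.filterMap fun a a' b ha ha' => by simp_all
  rw [domCount_eq_countP _ h, domCount_eq_countP _ hleft]
  clear h hleft
  induction l with
  | nil => rfl
  | cons a l ih =>
    cases a <;> simp [List.countP_cons, List.filterMap_cons, ih, inl_mem_cnbr_joinG_inl,
      inl_mem_cnbr_joinG_inr] <;> omega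

lemma domCount_joinG_inr (u : β) {l : List (α ⊕ β)} (h : l.Nodup) :
    domCount (joinG G H) (.inr u) l =
      domCount H u (l.filterMap Sum.getRight?) + (l.filterMap Sum.getLeft?).length := by
  rw [← domCount_map (joinG.swapIso G H).toEmbedding]
  simp only [RelEmbedding.coe_mk, Function.Embedding.coeFn_mk, RelIso.coe_fn_toEquiv,
    joinG.swapIso_apply, Sum.swap_inr]
  rw [domCount_joinG_inl u (h.map (joinG.swapIso G H).injective)]
  simp [List.filterMap_map]

lemma IsDNS.filterMap_getLeft? {l : List (α ⊕ β)} (h : IsDNS (joinG G H) l) :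
    IsDNS G (l.filterMap Sum.getLeft?) := by
  induction l using List.reverseRecOn with
  | nil => exact isDNS_nil
  | append_singleton l e ih =>
    obtain ⟨hl, he, u, hu, hcount⟩ := isDNS_append_singleton.mp h
    rcases e with x | y
    · simp only [List.filterMap_append, List.filterMap_cons, Sum.getLeft?_inl,
        List.filterMap_nil, isDNS_append_singleton]
      refine ⟨ih hl, by simpa using he, ?_⟩
      rcases u with u | u
      · rw [domCount_joinG_inl u hl.1] at hcount
        exact ⟨u, inl_mem_cnbr_joinG_inl.mp hu, by omega⟩
      -- a witness in `H` means at most one earlier vertex lies in `G`, so `x` is its own witness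
      · rw [domCount_joinG_inr u hl.1] at hcount
        exact ⟨x, self_mem_cnbr x, (domCount_le_length x _).trans (by omega)⟩
    · simpa [List.filterMap_cons] using ih hl

lemma IsDNS.filterMap_getRight? {l : List (α ⊕ β)} (h : IsDNS (joinG G H) l) :
    IsDNS H (l.filterMap Sum.getRight?) := by
  simpa [List.filterMap_map] using (h.map (joinG.swapIso G H).toEmbedding).filterMap_getLeft?

variable [Fintype α] [Fintype β]

lemma mdnn_add_isoInd_le_mdnn_joinG [Nonempty β] : mdnn G + isoInd G ≤ mdnn (joinG G H) := by
  obtain ⟨l, hl, hlen⟩ := exists_isDNS_length_eq_mdnn (G := G)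
  have hmap := hl.map (joinG.inlEmbedding G H)
  by_cases hiso : ∃ x, ∀ y, ¬ G.Adj x y
  · obtain ⟨x, hx⟩ := hiso
    obtain ⟨y⟩ := ‹Nonempty β›
    have hext : IsDNS (joinG G H) (l.map (joinG.inlEmbedding G H) ++ [.inr y]) :=
      isDNS_append_singleton.mpr ⟨hmap, by simp, .inl x, inl_mem_cnbr_joinG_inr,
        (domCount_map (joinG.inlEmbedding G H) x l).le.trans (domCount_le_one_of_isolated hx l)⟩
    simpa [hlen, isoInd_eq_one hx] using length_le_mdnn hext
  · simpa [isoInd, hiso, hlen] using length_le_mdnn hmap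

lemma length_le_of_isDNS_joinG_append_inl {l : List (α ⊕ β)} {x : α}
    (h : IsDNS (joinG G H) (l ++ [Sum.inl x])) :
    (l ++ [Sum.inl x]).length ≤ max (mdnn G + isoInd G) (mdnn H + isoInd H) := by
  obtain ⟨hl, -, u, -, hu⟩ := isDNS_append_singleton.mp h
  have hp := h.filterMap_getLeft?
  simp only [List.filterMap_append, List.filterMap_cons, Sum.getLeft?_inl,
    List.filterMap_nil] at hp
  have hlen := length_filterMap_getLeft?_add_getRight? l
  have hr := hl.filterMap_getRight?
  rw [List.length_append, List.length_singleton, ← hlen]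
  -- the witness of the last vertex is dominated by every earlier vertex on the other side
  rcases u with u | u
  · rw [domCount_joinG_inl u hl.1] at hu
    refine le_max_of_le_left ?_
    rcases Nat.eq_zero_or_pos (l.filterMap Sum.getRight?).length with hr0 | hr0
    · have := length_le_mdnn hp
      simp only [List.length_append, List.length_singleton] at this
      omega
    · have := length_add_one_le hp ((domCount_append_singleton_le u x _).trans (by omega))
      simp only [List.length_append, List.length_singleton] at this
      omega
  · rw [domCount_joinG_inr u hl.1] at hu
    refine le_max_of_le_right ?_
    rcases Nat.eq_zero_or_pos (l.filterMap Sum.getLeft?).length with hp0 | hp0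
    · have := length_add_one_le hr (u := u) (by omega)
      omega
    · have := length_add_two_le hr (u := u) (by omega)
      omega

lemma mdnn_joinG_le : mdnn (joinG G H) ≤ max (mdnn G + isoInd G) (mdnn H + isoInd H) := by
  obtain ⟨l, hl, hlen⟩ := exists_isDNS_length_eq_mdnn (G := joinG G H)
  rw [← hlen]
  rcases l.eq_nil_or_concat with rfl | ⟨l, e, rfl⟩
  · simp
  rw [List.concat_eq_append] at hl ⊢
  rcases e with x | y
  · exact length_le_of_isDNS_joinG_append_inl hl
  · have hswap : IsDNS (joinG H G) (l.map (joinG.swapIso G H) ++ [Sum.inl y]) := by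
      simpa using hl.map (joinG.swapIso G H).toEmbedding
    simpa [max_comm] using length_le_of_isDNS_joinG_append_inl hswap

end Join

/-- ρ(G ∨ H) = max{ρ(G) + a(G), ρ(H) + a(H)}. -/
theorem stmt18 {α β : Type*} [Fintype α] [Fintype β] [Nonempty α] [Nonempty β]
    (G : SimpleGraph α) (H : SimpleGraph β) :
    mdnn (joinG G H) = max (mdnn G + isoInd G) (mdnn H + isoInd H) := by
  refine le_antisymm mdnn_joinG_le (max_le mdnn_add_isoInd_le_mdnn_joinG ?_)
  calc mdnn H + isoInd H ≤ mdnn (joinG H G) := mdnn_add_isoInd_le_mdnn_joinG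
    _ ≤ mdnn (joinG G H) := mdnn_le_of_embedding (joinG.swapIso H G).toEmbedding
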